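/- Welch bound: if A is an m×N complex matrix with 1 ≤ m ≤ N, N ≥ 2, whose columns a_1,...,a_N each have unit Euclidean norm, then the coherence μ = max_{i≠k} |⟨a_i, a_k⟩| satisfies μ ≥ sqrt((N−m)/(m(N−1))). -/

import Mathlib

/-!
Let `G = AᴴA` be the Gram matrix of the columns and `C = AAᴴ` the frame operator. Since
`tr (G²) = tr (C²)`, both have the same Frobenius norm. The diagonal of `G` is `1` and its
off-diagonal entries have norm at most `μ`, so `‖G‖_F² ≤ N + N (N - 1) μ²`; on the other hand `C`
is `m × m` with trace `tr G = N`, so Cauchy–Schwarz on its diagonal gives `‖C‖_F² ≥ N² / m`.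
-/

open Finset
open scoped Matrix

namespace Matrix

variable {ι κ 𝕜 : Type*} [Fintype ι]

section Normed

variable {E : Type*} [SeminormedAddCommGroup E]

theorem sq_norm_trace_le_card_mul_sum_sq_norm (M : Matrix ι ι E) :
    ‖M.trace‖ ^ 2 ≤ Fintype.card ι * ∑ j, ∑ i, ‖M i j‖ ^ 2 :=
  calc ‖M.trace‖ ^ 2 ≤ (∑ i, ‖M i i‖) ^ 2 := by
        gcongr; exact norm_sum_le _ _
    _ ≤ Fintype.card ι * ∑ i, ‖M i i‖ ^ 2 := sq_sum_le_card_mul_sum_sq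
    _ ≤ Fintype.card ι * ∑ j, ∑ i, ‖M i j‖ ^ 2 := by
        gcongr with j
        exact single_le_sum (fun i _ => sq_nonneg ‖M i j‖) (mem_univ j)

theorem sum_sq_norm_le_of_norm_offDiag_le [DecidableEq ι] (M : Matrix ι ι E) {μ : ℝ}
    (hoff : ∀ i k, i ≠ k → ‖M i k‖ ≤ μ) :
    ∑ k, ∑ i, ‖M i k‖ ^ 2 ≤ ∑ k, (‖M k k‖ ^ 2 + (Fintype.card ι - 1) * μ ^ 2) := by
  gcongr with k
  rw [← add_sum_erase _ _ (mem_univ k)]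
  gcongr
  calc ∑ i ∈ univ.erase k, ‖M i k‖ ^ 2 ≤ ∑ i ∈ univ.erase k, μ ^ 2 := by
        gcongr with i hi
        exact hoff i k (ne_of_mem_erase hi)
    _ = (Fintype.card ι - 1) * μ ^ 2 := by
        rw [sum_const, card_erase_of_mem (mem_univ k), nsmul_eq_mul, card_univ,
          Nat.cast_pred (Fintype.card_pos_iff.mpr ⟨k⟩)]

end Normed

variable [RCLike 𝕜]

theorem conjTranspose_mul_self_apply_self (A : Matrix ι κ 𝕜) (k : κ) :
    (Aᴴ * A) k k = ((∑ r, ‖A r k‖ ^ 2 : ℝ) : 𝕜) := by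
  simp [mul_apply, RCLike.conj_mul]

theorem re_trace_conjTranspose_mul_self [Fintype κ] (A : Matrix ι κ 𝕜) :
    RCLike.re (Aᴴ * A).trace = ∑ k, ∑ r, ‖A r k‖ ^ 2 := by
  simp only [trace, diag, conjTranspose_mul_self_apply_self, map_sum, RCLike.ofReal_re]

theorem sum_sq_norm_conjTranspose_mul_self_eq [Fintype κ] (A : Matrix ι κ 𝕜) :
    ∑ k, ∑ i, ‖(Aᴴ * A) i k‖ ^ 2 = ∑ s, ∑ r, ‖(A * Aᴴ) r s‖ ^ 2 := by
  rw [← re_trace_conjTranspose_mul_self, ← re_trace_conjTranspose_mul_self,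
    (isHermitian_conjTranspose_mul_self A).eq, (isHermitian_mul_conjTranspose_self A).eq]
  simp only [Matrix.mul_assoc]
  rw [trace_mul_comm Aᴴ]
  simp only [Matrix.mul_assoc]

theorem welch_inequality [Fintype κ] [DecidableEq κ] (A : Matrix ι κ 𝕜)
    (hcol : ∀ k, ∑ r, ‖A r k‖ ^ 2 = 1) {μ : ℝ} (hoff : ∀ i k, i ≠ k → ‖(Aᴴ * A) i k‖ ≤ μ) :
    (Fintype.card κ : ℝ) ^ 2 ≤
      Fintype.card ι * (Fintype.card κ + Fintype.card κ * (Fintype.card κ - 1) * μ ^ 2) := by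
  have htrace : RCLike.re (A * Aᴴ).trace = Fintype.card κ := by
    simp [trace_mul_comm A, re_trace_conjTranspose_mul_self, hcol]
  have hdiag : ∀ k, ‖(Aᴴ * A) k k‖ = 1 := by
    simp [conjTranspose_mul_self_apply_self, hcol]
  calc (Fintype.card κ : ℝ) ^ 2 ≤ ‖(A * Aᴴ).trace‖ ^ 2 := by
        rw [← htrace]
        exact pow_le_pow_left₀ (htrace ▸ Nat.cast_nonneg _) (RCLike.re_le_norm _) 2
    _ ≤ Fintype.card ι * ∑ s, ∑ r, ‖(A * Aᴴ) r s‖ ^ 2 := sq_norm_trace_le_card_mul_sum_sq_norm _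
    _ = Fintype.card ι * ∑ k, ∑ i, ‖(Aᴴ * A) i k‖ ^ 2 := by
        rw [sum_sq_norm_conjTranspose_mul_self_eq]
    _ ≤ Fintype.card ι * ∑ k : κ, (‖(Aᴴ * A) k k‖ ^ 2 + (Fintype.card κ - 1) * μ ^ 2) :=
        mul_le_mul_of_nonneg_left (sum_sq_norm_le_of_norm_offDiag_le _ hoff) (by positivity)
    _ = _ := by simp only [hdiag, one_pow, sum_const, card_univ, nsmul_eq_mul]; ring

end Matrix

theorem stmt_13_general (N m : ℕ)
    (a : Fin m → Fin N → ℂ)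
    (hcol : ∀ k : Fin N, ∑ i, Complex.normSq (a i k) = 1)
    (μ : ℝ)
    (hμ : IsGreatest {x : ℝ | ∃ i k : Fin N, i ≠ k ∧
        x = ‖∑ r, (starRingEnd ℂ) (a r i) * a r k‖} μ) :
    Real.sqrt (((N : ℝ) - m) / (m * ((N : ℝ) - 1))) ≤ μ := by
  obtain ⟨⟨i₀, _, -, hμ₀⟩, hμ_max⟩ := hμ
  set A : Matrix (Fin m) (Fin N) ℂ := Matrix.of a
  have hcolA : ∀ k, ∑ r, ‖A r k‖ ^ 2 = 1 := by simpa [A, Complex.sq_norm] using hcol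
  have hoff : ∀ i k, i ≠ k → ‖(Aᴴ * A) i k‖ ≤ μ := fun i k hik =>
    hμ_max ⟨i, k, hik, by simp [A, Matrix.mul_apply]⟩
  have hwelch := Matrix.welch_inequality A hcolA hoff
  simp only [Fintype.card_fin] at hwelch
  have hN : (1 : ℝ) ≤ N := by exact_mod_cast i₀.pos
  rw [Real.sqrt_le_left (hμ₀ ▸ norm_nonneg _)]
  refine div_le_of_le_mul₀ (by nlinarith) (sq_nonneg μ) ?_
  nlinarith

theorem stmt_13 (N m : ℕ) (hN : 2 ≤ N) (hm : 1 ≤ m) (hmN : m ≤ N)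
    (a : Fin m → Fin N → ℂ)
    (hcol : ∀ k : Fin N, ∑ i, Complex.normSq (a i k) = 1)
    (μ : ℝ)
    (hμ : IsGreatest {x : ℝ | ∃ i k : Fin N, i ≠ k ∧
        x = ‖∑ r, (starRingEnd ℂ) (a r i) * a r k‖} μ) :
    Real.sqrt (((N : ℝ) - m) / (m * ((N : ℝ) - 1))) ≤ μ :=
  stmt_13_general N m a hcol μ hμ
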